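/- Let A be a cosimplicial abelian group and let cNA^n = ∩_{i=0}^{n-1} ker(s^i : A^n → A^{n-1}). Then the inclusion of cochain complexes cNA ⊆ A induces an isomorphism on cohomology in every degree. -/

import Mathlib

/-- A cosimplicial abelian group, given by abelian groups `A n` for `n : ℕ` together with
coface homomorphisms `d n i : A n →+ A (n+1)` (the map `d^i`, meaningful for `i ≤ n+1`) and
codegeneracy homomorphisms `s n i : A (n+1) →+ A n` (the map `s^i`, meaningful for `i ≤ n`),
subject to the standard cosimplicial identities. -/
structure CosAb (A : ℕ → Type) [∀ n, AddCommGroup (A n)] : Type where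
  d : ∀ n : ℕ, ℕ → (A n →+ A (n + 1))
  s : ∀ n : ℕ, ℕ → (A (n + 1) →+ A n)
  /-- `d^{j+1} ∘ d^i = d^i ∘ d^j` for `i ≤ j` (i.e. `d^j d^i = d^i d^{j-1}` for `i < j`). -/
  dd : ∀ n i j : ℕ, i ≤ j → j ≤ n + 1 →
    (d (n + 1) (j + 1)).comp (d n i) = (d (n + 1) i).comp (d n j)
  /-- `s^i d^i = id`. -/
  sd_self : ∀ n i : ℕ, i ≤ n → (s n i).comp (d n i) = AddMonoidHom.id (A n)
  /-- `s^i d^{i+1} = id`. -/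
  sd_succ : ∀ n i : ℕ, i ≤ n → (s n i).comp (d n (i + 1)) = AddMonoidHom.id (A n)
  /-- `s^{j+1} d^i = d^i s^j` for `i ≤ j` (i.e. `s^j d^i = d^i s^{j-1}` for `i < j`). -/
  sd_lt : ∀ n i j : ℕ, i ≤ j → j ≤ n →
    (s (n + 1) (j + 1)).comp (d (n + 1) i) = (d n i).comp (s n j)
  /-- `s^j d^i = d^{i-1} s^j` for `i > j + 1`. -/
  sd_gt : ∀ n i j : ℕ, j + 1 < i → i ≤ n + 2 →
    (s (n + 1) j).comp (d (n + 1) i) = (d n (i - 1)).comp (s n j)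
  /-- `s^j s^i = s^i s^{j+1}` for `i ≤ j`. -/
  ss : ∀ n i j : ℕ, i ≤ j → j ≤ n →
    (s n j).comp (s (n + 1) i) = (s n i).comp (s (n + 1) (j + 1))

/-- The coboundary `δ = Σ_{i=0}^{n+1} (-1)^i d^i : A^n → A^{n+1}`. -/
def deltaAp {A : ℕ → Type} [∀ n, AddCommGroup (A n)] (C : CosAb A) (n : ℕ) (a : A n) :
    A (n + 1) :=
  ∑ i ∈ Finset.range (n + 2), (-1 : ℤ) ^ i • C.d n i a

/-- Membership in `cNA^n = ∩_{i=0}^{n-1} ker (s^i : A^n → A^{n-1})` (all of `A^0` when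
`n = 0`). -/
def cNMem {A : ℕ → Type} [∀ n, AddCommGroup (A n)] (C : CosAb A) (n : ℕ) (a : A n) : Prop :=
  ∀ (m : ℕ) (hm : n = m + 1) (i : ℕ), i ≤ m →
    C.s m i (cast (congrArg A hm) a) = 0

section Helpers
variable {A : ℕ → Type} [∀ n, AddCommGroup (A n)] (C : CosAb A)

lemma deltaAp_zero (n : ℕ) : deltaAp C n (0 : A n) = 0 := by
  simp [deltaAp]

lemma deltaAp_add (n : ℕ) (a b : A n) :
    deltaAp C n (a + b) = deltaAp C n a + deltaAp C n b := by
  simp [deltaAp, smul_add, Finset.sum_add_distrib]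

lemma deltaAp_smul (n : ℕ) (c : ℤ) (a : A n) :
    deltaAp C n (c • a) = c • deltaAp C n a := by
  simp only [deltaAp, map_zsmul, Finset.smul_sum, smul_smul, mul_comm]

-- pointwise form of the simplicial identities
lemma dd' (n i j : ℕ) (hij : i ≤ j) (hj : j ≤ n + 1) (a : A n) :
    C.d (n + 1) (j + 1) (C.d n i a) = C.d (n + 1) i (C.d n j a) :=
  DFunLike.congr_fun (C.dd n i j hij hj) a

lemma sd_self' (n i : ℕ) (h : i ≤ n) (a : A n) : C.s n i (C.d n i a) = a :=
  DFunLike.congr_fun (C.sd_self n i h) a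

lemma sd_succ' (n i : ℕ) (h : i ≤ n) (a : A n) : C.s n i (C.d n (i + 1) a) = a :=
  DFunLike.congr_fun (C.sd_succ n i h) a

lemma sd_lt' (n i j : ℕ) (hij : i ≤ j) (hj : j ≤ n) (a : A (n + 1)) :
    C.s (n + 1) (j + 1) (C.d (n + 1) i a) = C.d n i (C.s n j a) :=
  DFunLike.congr_fun (C.sd_lt n i j hij hj) a

lemma sd_gt' (n i j : ℕ) (hij : j + 1 < i) (hi : i ≤ n + 2) (a : A (n + 1)) :
    C.s (n + 1) j (C.d (n + 1) i a) = C.d n (i - 1) (C.s n j a) :=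
  DFunLike.congr_fun (C.sd_gt n i j hij hi) a

lemma ss' (n i j : ℕ) (hij : i ≤ j) (hj : j ≤ n) (a : A (n + 2)) :
    C.s n j (C.s (n + 1) i a) = C.s n i (C.s (n + 1) (j + 1) a) :=
  DFunLike.congr_fun (C.ss n i j hij hj) a

lemma delta_delta (n : ℕ) (a : A n) : deltaAp C (n + 1) (deltaAp C n a) = 0 := by
  unfold deltaAp
  simp only [map_sum, map_zsmul, Finset.smul_sum]
  rw [← Finset.sum_product']
  refine Finset.sum_involution
    (fun p _ => if p.1 ≤ p.2 then (p.2 + 1, p.1) else (p.2, p.1 - 1)) ?h1 ?h2 ?h3 ?h4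
  · rintro ⟨i, j⟩ hp
    simp only [Finset.mem_product, Finset.mem_range] at hp
    by_cases h : i ≤ j
    · simp only [h, if_pos]
      have hdd := dd' C n i j h (by omega) a
      rw [hdd, smul_smul, smul_smul, ← add_smul]
      have : (-1 : ℤ) ^ (j + 1) * (-1) ^ i = -((-1 : ℤ) ^ i * (-1) ^ j) := by ring
      rw [this, add_neg_cancel, zero_smul]
    · simp only [h, if_neg, not_false_iff]
      obtain ⟨i', rfl⟩ : ∃ i', i = i' + 1 := ⟨i - 1, by omega⟩
      have hdd := dd' C n j i' (by omega) (by omega) a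
      simp only [Nat.add_sub_cancel]
      rw [← hdd, smul_smul, smul_smul, ← add_smul]
      have : (-1 : ℤ) ^ j * (-1) ^ i' = -((-1 : ℤ) ^ (i' + 1) * (-1) ^ j) := by
        rw [pow_succ]; ring
      rw [this, add_neg_cancel, zero_smul]
  · rintro ⟨i, j⟩ hp _
    by_cases h : i ≤ j
    · simp only [h, if_pos, ne_eq, Prod.mk.injEq]
      omega
    · simp only [h, if_neg, not_false_iff, ne_eq, Prod.mk.injEq]
      omega
  · rintro ⟨i, j⟩ hp
    simp only [Finset.mem_product, Finset.mem_range] at hp ⊢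
    by_cases h : i ≤ j
    · simp only [h, if_pos]; omega
    · simp only [h, if_neg, not_false_iff]; omega
  · rintro ⟨i, j⟩ hp
    by_cases h : i ≤ j
    · simp only [h, if_pos]
      have : ¬ (j + 1 ≤ i) := by omega
      simp [this]
    · simp only [h, if_neg, not_false_iff]
      have : j ≤ i - 1 := by omega
      simp only [this, if_pos]
      have : i - 1 + 1 = i := by omega
      simp [this]

/-- `s^i (s^k x) = 0` for `i < k` when `s^j x = 0` for `j < k`. -/
lemma ss_zero (m k : ℕ) (x : A (m + 2)) (hk : k ≤ m + 1)
    (hx : ∀ i < k, C.s (m + 1) i x = 0) (i : ℕ) (hi : i < k) :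
    C.s m i (C.s (m + 1) k x) = 0 := by
  obtain ⟨k', rfl⟩ : ∃ k', k = k' + 1 := ⟨k - 1, by omega⟩
  rw [← ss' C m i k' (by omega) (by omega) x, hx i hi, map_zero]

end Helpers

section Core
variable {A : ℕ → Type} [∀ n, AddCommGroup (A n)] (C : CosAb A)

/-- Evaluation of `s^i (d^j (s^k x))` for `i ≤ k`, `j ≤ k`. -/
lemma term_eval (m k i j : ℕ) (hk : k ≤ m) (hi : i ≤ k) (hj : j ≤ k) (x : A (m + 1))
    (hx : ∀ i < k, C.s m i x = 0) :
    C.s m i (C.d m j (C.s m k x)) =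
      if j = i ∨ j = i + 1 then C.s m k x else 0 := by
  rcases Nat.lt_trichotomy j i with hji | rfl | hji
  · have hne : ¬(j = i ∨ j = i + 1) := by omega
    rw [if_neg hne]
    obtain ⟨i', rfl⟩ : ∃ i', i = i' + 1 := ⟨i - 1, by omega⟩
    obtain ⟨m', rfl⟩ : ∃ m', m = m' + 1 := ⟨m - 1, by omega⟩
    rw [sd_lt' C m' j i' (by omega) (by omega)]
    rw [ss_zero C m' k x (by omega) hx i' (by omega), map_zero]
  · rw [if_pos (Or.inl rfl), sd_self' C m j (by omega)]
  · by_cases hj1 : j = i + 1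
    · rw [if_pos (Or.inr hj1), hj1, sd_succ' C m i (by omega)]
    · have hne : ¬(j = i ∨ j = i + 1) := by omega
      rw [if_neg hne]
      obtain ⟨m', rfl⟩ : ∃ m', m = m' + 1 := ⟨m - 1, by omega⟩
      rw [sd_gt' C m' j i (by omega) (by omega)]
      rw [ss_zero C m' k x (by omega) hx i (by omega), map_zero]

lemma sT_eq (m k : ℕ) (hk : k ≤ m) (x : A (m + 1)) (hx : ∀ i < k, C.s m i x = 0)
    (i : ℕ) (hi : i ≤ k) :
    C.s m i (∑ j ∈ Finset.range (k + 1), (-1 : ℤ) ^ j • C.d m j (C.s m k x)) =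
      (if i = k then ((-1 : ℤ) ^ k) else 0) • C.s m k x := by
  rw [map_sum]
  have hrw : ∀ j ∈ Finset.range (k + 1),
      C.s m i ((-1 : ℤ) ^ j • C.d m j (C.s m k x)) =
      ((if j = i then (-1 : ℤ) ^ j else 0) + (if j = i + 1 then (-1 : ℤ) ^ j else 0))
        • C.s m k x := by
    intro j hj
    rw [map_zsmul,
      term_eval C m k i j hk hi (by have := Finset.mem_range.mp hj; omega) x hx]
    by_cases h1 : j = i
    · have h2 : ¬ j = i + 1 := by omega
      simp [h1, h2]
    · by_cases h2 : j = i + 1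
      · simp [h1, h2]
      · simp [h1, h2]
  rw [Finset.sum_congr rfl hrw, ← Finset.sum_smul, Finset.sum_add_distrib,
      Finset.sum_ite_eq' (Finset.range (k + 1)) i (fun j => (-1 : ℤ) ^ j),
      Finset.sum_ite_eq' (Finset.range (k + 1)) (i + 1) (fun j => (-1 : ℤ) ^ j)]
  by_cases h : i = k
  · subst h
    have h1 : i ∈ Finset.range (i + 1) := by simp
    have h2 : i + 1 ∉ Finset.range (i + 1) := by simp
    rw [if_pos h1, if_neg h2, if_pos rfl, add_zero]
  · have h1 : i ∈ Finset.range (k + 1) := by simp; omega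
    have h2 : i + 1 ∈ Finset.range (k + 1) := by simp; omega
    rw [if_pos h1, if_pos h2, if_neg h]
    have : (-1 : ℤ) ^ i + (-1) ^ (i + 1) = 0 := by rw [pow_succ]; ring
    rw [this, zero_smul]

lemma delta_s_eq (m k : ℕ) (hk : k ≤ m) (x : A (m + 1)) (hx : ∀ i < k, C.s m i x = 0)
    (hδ : C.s (m + 1) k (deltaAp C (m + 1) x) = 0) :
    deltaAp C m (C.s m k x) =
      ∑ j ∈ Finset.range (k + 1), (-1 : ℤ) ^ j • C.d m j (C.s m k x) := by
  have hs2 : C.s (m + 1) k (∑ j ∈ Finset.range (k + 2), (-1 : ℤ) ^ j • C.d (m + 1) j x)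
      = 0 := by
    rw [Finset.sum_range_succ, Finset.sum_range_succ, map_add, map_add, map_zsmul, map_zsmul,
        sd_self' C (m + 1) k (by omega), sd_succ' C (m + 1) k (by omega)]
    have h0 : C.s (m + 1) k (∑ j ∈ Finset.range k, (-1 : ℤ) ^ j • C.d (m + 1) j x) = 0 := by
      rw [map_sum]
      refine Finset.sum_eq_zero fun j hj => ?_
      have hjk : j < k := Finset.mem_range.mp hj
      obtain ⟨k', rfl⟩ : ∃ k', k = k' + 1 := ⟨k - 1, by omega⟩
      rw [map_zsmul, sd_lt' C m j k' (by omega) (by omega) x, hx k' (by omega), map_zero,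
        smul_zero]
    rw [h0, zero_add]
    rw [pow_succ, mul_smul]
    simp
  have hu : C.s (m + 1) k
      (∑ j ∈ Finset.Ico (k + 2) (m + 3), (-1 : ℤ) ^ j • C.d (m + 1) j x) = 0 := by
    have hfull : (∑ j ∈ Finset.range (k + 2), (-1 : ℤ) ^ j • C.d (m + 1) j x)
        + ∑ j ∈ Finset.Ico (k + 2) (m + 3), (-1 : ℤ) ^ j • C.d (m + 1) j x
        = deltaAp C (m + 1) x := by
      unfold deltaAp
      rw [Finset.range_eq_Ico,
        Finset.sum_Ico_consecutive _ (by omega : 0 ≤ k + 2) (by omega : k + 2 ≤ m + 3), ← Finset.range_eq_Ico]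
    have := congrArg (C.s (m + 1) k) hfull
    rw [map_add, hs2, zero_add, hδ] at this
    exact this
  have tail : ∑ i ∈ Finset.Ico (k + 1) (m + 2), (-1 : ℤ) ^ i • C.d m i (C.s m k x) = 0 := by
    have hterm : ∀ i ∈ Finset.Ico (k + 1) (m + 2),
        (-1 : ℤ) ^ i • C.d m i (C.s m k x)
          = C.s (m + 1) k (-((-1 : ℤ) ^ (i + 1) • C.d (m + 1) (i + 1) x)) := by
      intro i hi
      simp only [Finset.mem_Ico] at hi
      have hgt := sd_gt' C m (i + 1) k (by omega) (by omega) x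
      rw [Nat.add_sub_cancel] at hgt
      rw [map_neg, map_zsmul, hgt, pow_succ, mul_smul]
      simp
    rw [Finset.sum_congr rfl hterm, ← map_sum]
    have hre : ∑ i ∈ Finset.Ico (k + 1) (m + 2), -((-1 : ℤ) ^ (i + 1) • C.d (m + 1) (i + 1) x)
        = -∑ j ∈ Finset.Ico (k + 2) (m + 3), (-1 : ℤ) ^ j • C.d (m + 1) j x := by
      rw [← Finset.sum_neg_distrib]
      rw [Finset.sum_Ico_eq_sum_range, Finset.sum_Ico_eq_sum_range]
      rw [show m + 2 - (k + 1) = m + 3 - (k + 2) by omega]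
      refine Finset.sum_congr rfl fun t _ => ?_
      rw [show k + 1 + t + 1 = k + 2 + t by omega]
    rw [hre, map_neg, hu, neg_zero]
  unfold deltaAp
  rw [Finset.range_eq_Ico, ← Finset.sum_Ico_consecutive _
    (by omega : 0 ≤ k + 1) (by omega : k + 1 ≤ m + 2), ← Finset.range_eq_Ico, tail, add_zero]

lemma deltaAp_sub (n : ℕ) (a b : A n) :
    deltaAp C n (a - b) = deltaAp C n a - deltaAp C n b := by
  simp [deltaAp, smul_sub, Finset.sum_sub_distrib]

lemma cosStep (m k : ℕ) (hk : k ≤ m) (x : A (m + 1)) (hx : ∀ i < k, C.s m i x = 0)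
    (hδ : ∀ j, j ≤ m + 1 → C.s (m + 1) j (deltaAp C (m + 1) x) = 0) :
    ∃ x' : A (m + 1), (∀ i < k + 1, C.s m i x' = 0) ∧
      x - x' = deltaAp C m ((-1 : ℤ) ^ k • C.s m k x) ∧
      deltaAp C (m + 1) x' = deltaAp C (m + 1) x := by
  refine ⟨x - (-1 : ℤ) ^ k • deltaAp C m (C.s m k x), ?_, ?_, ?_⟩
  · intro i hi
    rw [map_sub, map_zsmul, delta_s_eq C m k hk x hx (hδ k (by omega)),
        sT_eq C m k hk x hx i (by omega)]
    by_cases h : i = k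
    · subst h
      rw [if_pos rfl, smul_smul, ← pow_add, Even.neg_one_pow ⟨i, rfl⟩, one_smul, sub_self]
    · rw [if_neg h, zero_smul, smul_zero, hx i (by omega), sub_zero]
  · rw [sub_sub_cancel, deltaAp_smul]
  · rw [deltaAp_sub, deltaAp_smul, delta_delta, smul_zero, sub_zero]

lemma cosNormalize : ∀ (t m k : ℕ), k + t = m + 1 → ∀ x : A (m + 1),
    (∀ i < k, C.s m i x = 0) →
    (∀ j, j ≤ m + 1 → C.s (m + 1) j (deltaAp C (m + 1) x) = 0) →
    ∃ (y : A (m + 1)) (c : A m), cNMem C (m + 1) y ∧ x - y = deltaAp C m c ∧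
      deltaAp C (m + 1) y = deltaAp C (m + 1) x := by
  intro t
  induction t with
  | zero =>
    intro m k hkm x hx _
    refine ⟨x, 0, ?_, by rw [deltaAp_zero, sub_self], rfl⟩
    intro m' hm i hi
    obtain rfl : m' = m := by omega
    exact hx i (by omega)
  | succ t ih =>
    intro m k hkm x hx hδ
    obtain ⟨x', hx', hdiff, hdel⟩ := cosStep C m k (by omega) x hx hδ
    obtain ⟨y, c, hy, hyc, hyd⟩ := ih m (k + 1) (by omega) x' hx'
      (fun j hj => by rw [hdel]; exact hδ j hj)
    refine ⟨y, (-1 : ℤ) ^ k • C.s m k x + c, hy, ?_, by rw [hyd, hdel]⟩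
    rw [deltaAp_add, ← hdiff, ← hyc]
    abel

end Core

/-- The inclusion of cochain complexes `cNA ⊆ A` induces an isomorphism on
cohomology in every degree: in degree `0` the complexes have the same cocycles, every
cocycle of `A` is cohomologous to a cocycle lying in `cNA`, and two `cNA`-cocycles which
are cohomologous in `A` are already cohomologous in `cNA`. -/
theorem cN_inclusion_quasiIso
    (A : ℕ → Type) [∀ n, AddCommGroup (A n)] (C : CosAb A) :
    (∀ a : A 0, cNMem C 0 a) ∧
    (∀ (n : ℕ) (a : A (n + 1)), deltaAp C (n + 1) a = 0 →
      ∃ (b : A (n + 1)) (c : A n), cNMem C (n + 1) b ∧ deltaAp C (n + 1) b = 0 ∧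
        a - b = deltaAp C n c) ∧
    (∀ (n : ℕ) (b b' : A (n + 1)) (c : A n),
      cNMem C (n + 1) b → cNMem C (n + 1) b' →
      deltaAp C (n + 1) b = 0 → deltaAp C (n + 1) b' = 0 →
      b - b' = deltaAp C n c →
      ∃ c' : A n, cNMem C n c' ∧ b - b' = deltaAp C n c') := by
  refine ⟨?_, ?_, ?_⟩
  · intro a m hm i hi
    exact absurd hm (by omega)
  · intro n a ha
    obtain ⟨y, c, hy, hyc, hyd⟩ := cosNormalize C (n + 1) n 0 (by omega) a
      (fun i hi => absurd hi (Nat.not_lt_zero i))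
      (fun j hj => by rw [ha, map_zero])
    exact ⟨y, c, hy, by rw [hyd, ha], hyc⟩
  · intro n b b' c hb hb' hdb hdb' hbc
    cases n with
    | zero =>
      exact ⟨c, fun m hm i hi => absurd hm (by omega), hbc⟩
    | succ n' =>
      have hδc : ∀ j, j ≤ n' + 1 → C.s (n' + 1) j (deltaAp C (n' + 1) c) = 0 := by
        intro j hj
        have h1 : C.s (n' + 1) j b = 0 := hb (n' + 1) rfl j hj
        have h2 : C.s (n' + 1) j b' = 0 := hb' (n' + 1) rfl j hj
        rw [← hbc, map_sub, h1, h2, sub_zero]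
      obtain ⟨y, c₂, hy, _, hyd⟩ := cosNormalize C (n' + 1) n' 0 (by omega) c
        (fun i hi => absurd hi (Nat.not_lt_zero i)) hδc
      exact ⟨y, hy, by rw [hyd]; exact hbc⟩
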